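/- Let $\Omega_0 \subset \mathbb{R}$ (dimension $n = 1$) be a bounded open interval, $T > 0$, and let $a, b, f$ be continuous on $\overline{\Omega}_0 \times [0,T]$ with $a \geq 0$, $a = 0$ at the two boundary points, and $b\,\nu \leq 0$ at each boundary point (where $\nu = \pm 1$ is the outward normal). Then any two solutions of $w_t = a\, w_{xx} + b\, w_x + f w + g$ on $\overline{\Omega}_0 \times [0,T]$, $C^2$ in space and $C^1$ in time, with the same initial data $w(\cdot, 0) = 0$, coincide; no boundary conditions are imposed. -/

import Mathlib

/-!
Uniqueness reduces to `w ≤ 0` for a solution `w` of the homogeneous equation with zero initial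
data (applied to `±(w₁ - w₂)`). With `C ≥ f` and `δ > 0`, let `v = e^{-Ct} w - δ t` attain its
maximum over the rectangle at `(x₀, t₀)`. If that maximum were positive, then `t₀ > 0` and
`v_t(x₀, t₀) ≥ 0` would give `w_t - C w > 0`, while the equation gives
`w_t - C w ≤ a w_xx + b w_x ≤ 0`: at an interior spatial maximum `w_x = 0` and `w_xx ≤ 0`, and at an
endpoint `a = 0` while `b` and `w_x` have opposite signs. Letting `δ → 0` gives `w ≤ 0`.
-/

open Set Topology

theorem IsLocalMaxOn.sub_mul_deriv_nonpos {f : ℝ → ℝ} {s : Set ℝ} {a c : ℝ}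
    (hf : IsLocalMaxOn f s a) (hd : DifferentiableAt ℝ f a) (hs : segment ℝ a c ⊆ s) :
    (c - a) * deriv f a ≤ 0 := by
  simpa [smul_eq_mul] using hf.hasFDerivWithinAt_nonpos hd.hasDerivAt.hasFDerivAt.hasFDerivWithinAt
    (sub_mem_posTangentConeAt_of_segment_subset hs)

theorem deriv_nonpos_of_isMaxOn_Icc_left {f : ℝ → ℝ} {a b : ℝ} (hab : a < b)
    (hf : IsMaxOn f (Icc a b) a) (hd : DifferentiableAt ℝ f a) : deriv f a ≤ 0 := by
  have := hf.localize.sub_mul_deriv_nonpos hd (segment_eq_Icc hab.le).subset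
  exact nonpos_of_mul_nonpos_right this (sub_pos.2 hab)

theorem deriv_nonneg_of_isMaxOn_Icc_right {f : ℝ → ℝ} {a b : ℝ} (hab : a < b)
    (hf : IsMaxOn f (Icc a b) b) (hd : DifferentiableAt ℝ f b) : 0 ≤ deriv f b := by
  have := hf.localize.sub_mul_deriv_nonpos hd (segment_symm ℝ b a ▸ segment_eq_Icc hab.le).subset
  exact nonneg_of_mul_nonpos_right this (sub_neg.2 hab)

theorem IsLocalMax.deriv_deriv_nonpos {f : ℝ → ℝ} {a : ℝ} (hf : IsLocalMax f a)
    (hc : ContinuousAt f a) : deriv (deriv f) a ≤ 0 := by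
  by_contra! hpos
  have hmin : IsLocalMin f a := isLocalMin_of_deriv_deriv_pos hpos hf.deriv_eq_zero hc
  have hconst : f =ᶠ[𝓝 a] fun _ => f a := by
    filter_upwards [hf, hmin] with x hmax hmin using le_antisymm hmax hmin
  have : deriv (deriv f) a = 0 := by
    rw [hconst.deriv.deriv_eq, deriv_const', deriv_const]
  exact hpos.ne' this

theorem mul_deriv_deriv_add_mul_deriv_nonpos_of_isMaxOn {h : ℝ → ℝ} {α β x₀ A B : ℝ}
    (hmax : IsMaxOn h (Icc α β) x₀) (hx₀ : x₀ ∈ Icc α β) (hd : DifferentiableAt ℝ h x₀)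
    (hA : 0 ≤ A) (hα : x₀ = α → A = 0 ∧ 0 ≤ B) (hβ : x₀ = β → A = 0 ∧ B ≤ 0) :
    A * deriv (deriv h) x₀ + B * deriv h x₀ ≤ 0 := by
  rcases hx₀.1.eq_or_lt with rfl | hαx
  · obtain ⟨rfl, hB⟩ := hα rfl
    rcases hx₀.2.eq_or_lt with hxβ | hxβ
    · simp [le_antisymm (hβ hxβ).2 hB]
    · simpa using mul_nonpos_of_nonneg_of_nonpos hB (deriv_nonpos_of_isMaxOn_Icc_left hxβ hmax hd)
  rcases hx₀.2.eq_or_lt with rfl | hxβ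
  · obtain ⟨rfl, hB⟩ := hβ rfl
    simpa using mul_nonpos_of_nonpos_of_nonneg hB (deriv_nonneg_of_isMaxOn_Icc_right hαx hmax hd)
  · have hloc : IsLocalMax h x₀ := hmax.isLocalMax (Icc_mem_nhds hαx hxβ)
    simpa [hloc.deriv_eq_zero] using
      mul_nonpos_of_nonneg_of_nonpos hA (hloc.deriv_deriv_nonpos hd.continuousAt)

theorem hasDerivAt_exp_mul_sub_mul {u : ℝ → ℝ} {t : ℝ} (hu : DifferentiableAt ℝ u t) (C δ : ℝ) :
    HasDerivAt (fun s => Real.exp (-C * s) * u s - δ * s)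
      (Real.exp (-C * t) * (deriv u t - C * u t) - δ) t := by
  have hexp : HasDerivAt (fun s => Real.exp (-C * s)) (Real.exp (-C * t) * -C) t := by
    simpa using ((hasDerivAt_id t).const_mul (-C)).exp
  exact ((hexp.mul hu.hasDerivAt).sub ((hasDerivAt_id t).const_mul δ)).congr_deriv (by ring)

def SolvesOn (α β T : ℝ) (a b f g w : ℝ → ℝ → ℝ) : Prop :=
  ∀ x ∈ Icc α β, ∀ t ∈ Icc 0 T, deriv (w x) t = a x t * deriv (deriv fun y => w y t) x
    + b x t * deriv (fun y => w y t) x + f x t * w x t + g x t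

theorem SolvesOn.sub {α β T : ℝ} {a b f g₁ g₂ w₁ w₂ : ℝ → ℝ → ℝ}
    (h₁ : SolvesOn α β T a b f g₁ w₁) (h₂ : SolvesOn α β T a b f g₂ w₂)
    (hw₁t : ∀ x, Differentiable ℝ (w₁ x)) (hw₂t : ∀ x, Differentiable ℝ (w₂ x))
    (hw₁x : ∀ t, ContDiff ℝ 2 fun x => w₁ x t) (hw₂x : ∀ t, ContDiff ℝ 2 fun x => w₂ x t) :
    SolvesOn α β T a b f (g₁ - g₂) (w₁ - w₂) := by
  intro x hx t ht
  have hx₁ : (deriv fun y => (w₁ - w₂) y t) = deriv (fun y => w₁ y t) - deriv fun y => w₂ y t :=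
    funext fun y => deriv_sub ((hw₁x t).differentiable two_ne_zero y)
      ((hw₂x t).differentiable two_ne_zero y)
  have hxx : deriv (deriv fun y => (w₁ - w₂) y t) x
      = deriv (deriv fun y => w₁ y t) x - deriv (deriv fun y => w₂ y t) x := by
    rw [hx₁]
    exact deriv_sub ((hw₁x t).differentiable_deriv_two x) ((hw₂x t).differentiable_deriv_two x)
  have ht₁ : deriv ((w₁ - w₂) x) t = deriv (w₁ x) t - deriv (w₂ x) t :=
    deriv_sub (hw₁t x t) (hw₂t x t)
  rw [hxx, hx₁, ht₁, h₁ x hx t ht, h₂ x hx t ht]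
  simp only [Pi.sub_apply]
  ring

/-- Condition (B''): `a ≥ 0` vanishes at both ends and `b ν ≤ 0` for the outward normals
`ν(α) = -1`, `ν(β) = 1`. -/
structure DegenerateAtBoundary (α β T : ℝ) (a b : ℝ → ℝ → ℝ) : Prop where
  nonneg : ∀ x ∈ Icc α β, ∀ t ∈ Icc 0 T, 0 ≤ a x t
  left_eq_zero : ∀ t ∈ Icc 0 T, a α t = 0
  right_eq_zero : ∀ t ∈ Icc 0 T, a β t = 0
  drift_left_nonneg : ∀ t ∈ Icc 0 T, 0 ≤ b α t
  drift_right_nonpos : ∀ t ∈ Icc 0 T, b β t ≤ 0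

namespace SolvesOn

variable {α β T : ℝ} {a b f : ℝ → ℝ → ℝ}

theorem exp_mul_sub_mul_le_zero {C δ : ℝ} {w : ℝ → ℝ → ℝ} (hw : SolvesOn α β T a b f 0 w)
    (hab : DegenerateAtBoundary α β T a b) (hfC : ∀ x ∈ Icc α β, ∀ t ∈ Icc 0 T, f x t ≤ C)
    (hδ : 0 < δ) (hwt : ∀ x, Differentiable ℝ (w x)) (hwx : ∀ t, Differentiable ℝ fun x => w x t)
    (hwc : Continuous fun p : ℝ × ℝ => w p.1 p.2) (hinit : ∀ x ∈ Icc α β, w x 0 = 0) :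
    ∀ x ∈ Icc α β, ∀ t ∈ Icc 0 T, Real.exp (-C * t) * w x t - δ * t ≤ 0 := by
  intro x hx t ht
  set v : ℝ × ℝ → ℝ := fun p => Real.exp (-C * p.2) * w p.1 p.2 - δ * p.2
  have hvc : Continuous v := by fun_prop
  obtain ⟨⟨x₀, t₀⟩, ⟨hx₀, ht₀⟩, hmax⟩ :=
    (isCompact_Icc.prod isCompact_Icc).exists_isMaxOn ⟨(x, t), hx, ht⟩ hvc.continuousOn
  refine (hmax (mk_mem_prod hx ht)).trans ?_
  by_contra! hpos
  have hexp := Real.exp_pos (-C * t₀)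
  have ht₀pos : 0 < t₀ := ht₀.1.lt_of_ne (by rintro rfl; simp [v, hinit x₀ hx₀] at hpos)
  have hw₀ : 0 < w x₀ t₀ :=
    pos_of_mul_pos_right (by linarith [mul_pos hδ ht₀pos] : 0 < _ * w x₀ t₀) hexp.le
  have htime : 0 < deriv (w x₀) t₀ - C * w x₀ t₀ := by
    have hφ := hasDerivAt_exp_mul_sub_mul (hwt x₀ t₀) C δ
    have hmaxφ : IsMaxOn (fun s => Real.exp (-C * s) * w x₀ s - δ * s) (Icc 0 t₀) t₀ :=
      fun s hs => hmax (mk_mem_prod hx₀ ⟨hs.1, hs.2.trans ht₀.2⟩)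
    have := deriv_nonneg_of_isMaxOn_Icc_right ht₀pos hmaxφ hφ.differentiableAt
    rw [hφ.deriv] at this
    exact pos_of_mul_pos_right (by linarith) hexp.le
  have hspace : a x₀ t₀ * deriv (deriv fun y => w y t₀) x₀
      + b x₀ t₀ * deriv (fun y => w y t₀) x₀ ≤ 0 := by
    have hmaxx : IsMaxOn (fun y => w y t₀) (Icc α β) x₀ := fun y hy => by
      have hvy : v (y, t₀) ≤ v (x₀, t₀) := hmax (mk_mem_prod hy ht₀)
      exact le_of_mul_le_mul_left (by simp only [v] at hvy; linarith) hexp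
    refine mul_deriv_deriv_add_mul_deriv_nonpos_of_isMaxOn hmaxx hx₀ (hwx t₀ x₀)
      (hab.nonneg x₀ hx₀ t₀ ht₀) ?_ ?_
    · rintro rfl
      exact ⟨hab.left_eq_zero t₀ ht₀, hab.drift_left_nonneg t₀ ht₀⟩
    · rintro rfl
      exact ⟨hab.right_eq_zero t₀ ht₀, hab.drift_right_nonpos t₀ ht₀⟩
  have hreaction : f x₀ t₀ * w x₀ t₀ ≤ C * w x₀ t₀ :=
    mul_le_mul_of_nonneg_right (hfC x₀ hx₀ t₀ ht₀) hw₀.le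
  have heq := hw x₀ hx₀ t₀ ht₀
  simp only [Pi.zero_apply, add_zero] at heq
  linarith

theorem nonpos {w : ℝ → ℝ → ℝ} (hw : SolvesOn α β T a b f 0 w)
    (hab : DegenerateAtBoundary α β T a b)
    (hfc : ContinuousOn (fun p : ℝ × ℝ => f p.1 p.2) (Icc α β ×ˢ Icc 0 T))
    (hwt : ∀ x, Differentiable ℝ (w x)) (hwx : ∀ t, Differentiable ℝ fun x => w x t)
    (hwc : Continuous fun p : ℝ × ℝ => w p.1 p.2) (hinit : ∀ x ∈ Icc α β, w x 0 = 0) :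
    ∀ x ∈ Icc α β, ∀ t ∈ Icc 0 T, w x t ≤ 0 := by
  intro x hx t ht
  obtain ⟨C, hC⟩ := (isCompact_Icc.prod isCompact_Icc).bddAbove_image hfc
  have hfC : ∀ x ∈ Icc α β, ∀ t ∈ Icc 0 T, f x t ≤ C :=
    fun x hx t ht => hC ⟨(x, t), ⟨hx, ht⟩, rfl⟩
  have hweighted : Real.exp (-C * t) * w x t ≤ 0 := by
    refine le_of_forall_pos_le_add fun ε hε => ?_
    have ht1 : 0 < t + 1 := by linarith [ht.1]
    have hδ : 0 < ε / (t + 1) := div_pos hε ht1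
    have hδt : ε / (t + 1) * t ≤ ε := by
      rw [div_mul_eq_mul_div, div_le_iff₀ ht1]
      nlinarith
    linarith [hw.exp_mul_sub_mul_le_zero hab hfC hδ hwt hwx hwc hinit x hx t ht]
  exact nonpos_of_mul_nonpos_right hweighted (Real.exp_pos _)

theorem le {g w₁ w₂ : ℝ → ℝ → ℝ}
    (h₁ : SolvesOn α β T a b f g w₁) (h₂ : SolvesOn α β T a b f g w₂)
    (hab : DegenerateAtBoundary α β T a b)
    (hfc : ContinuousOn (fun p : ℝ × ℝ => f p.1 p.2) (Icc α β ×ˢ Icc 0 T))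
    (hw₁t : ∀ x, Differentiable ℝ (w₁ x)) (hw₂t : ∀ x, Differentiable ℝ (w₂ x))
    (hw₁x : ∀ t, ContDiff ℝ 2 fun x => w₁ x t) (hw₂x : ∀ t, ContDiff ℝ 2 fun x => w₂ x t)
    (hw₁c : Continuous fun p : ℝ × ℝ => w₁ p.1 p.2)
    (hw₂c : Continuous fun p : ℝ × ℝ => w₂ p.1 p.2)
    (hinit₁ : ∀ x ∈ Icc α β, w₁ x 0 = 0) (hinit₂ : ∀ x ∈ Icc α β, w₂ x 0 = 0) :
    ∀ x ∈ Icc α β, ∀ t ∈ Icc 0 T, w₁ x t ≤ w₂ x t := by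
  intro x hx t ht
  have hsub : SolvesOn α β T a b f 0 (w₁ - w₂) := by
    simpa using h₁.sub h₂ hw₁t hw₂t hw₁x hw₂x
  refine sub_nonpos.1 (hsub.nonpos hab hfc (fun x => (hw₁t x).sub (hw₂t x))
    (fun t => ((hw₁x t).sub (hw₂x t)).differentiable two_ne_zero) (hw₁c.sub hw₂c)
    (fun x hx => ?_) x hx t ht)
  simp [hinit₁ x hx, hinit₂ x hx]

end SolvesOn

theorem stmt5_general (α β T : ℝ)
    (a b f g : ℝ → ℝ → ℝ)
    (hfcont : ContinuousOn (fun p : ℝ × ℝ => f p.1 p.2) (Set.Icc α β ×ˢ Set.Icc 0 T))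
    (hannn : ∀ x ∈ Set.Icc α β, ∀ t ∈ Set.Icc 0 T, 0 ≤ a x t)
    (haα : ∀ t ∈ Set.Icc 0 T, a α t = 0) (haβ : ∀ t ∈ Set.Icc 0 T, a β t = 0)
    (hbα : ∀ t ∈ Set.Icc 0 T, 0 ≤ b α t) (hbβ : ∀ t ∈ Set.Icc 0 T, b β t ≤ 0)
    (w₁ w₂ : ℝ → ℝ → ℝ)
    (hw₁t : ∀ x, Differentiable ℝ (w₁ x)) (hw₂t : ∀ x, Differentiable ℝ (w₂ x))
    (hw₁x : ∀ t, ContDiff ℝ 2 fun x => w₁ x t) (hw₂x : ∀ t, ContDiff ℝ 2 fun x => w₂ x t)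
    (hw₁c : Continuous fun p : ℝ × ℝ => w₁ p.1 p.2)
    (hw₂c : Continuous fun p : ℝ × ℝ => w₂ p.1 p.2)
    (heq₁ : ∀ x ∈ Set.Icc α β, ∀ t ∈ Set.Icc 0 T,
      deriv (w₁ x) t = a x t * deriv (deriv fun y => w₁ y t) x
        + b x t * deriv (fun y => w₁ y t) x + f x t * w₁ x t + g x t)
    (heq₂ : ∀ x ∈ Set.Icc α β, ∀ t ∈ Set.Icc 0 T,
      deriv (w₂ x) t = a x t * deriv (deriv fun y => w₂ y t) x
        + b x t * deriv (fun y => w₂ y t) x + f x t * w₂ x t + g x t)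
    (hinit₁ : ∀ x ∈ Set.Icc α β, w₁ x 0 = 0) (hinit₂ : ∀ x ∈ Set.Icc α β, w₂ x 0 = 0) :
    ∀ x ∈ Set.Icc α β, ∀ t ∈ Set.Icc 0 T, w₁ x t = w₂ x t := by
  have hab : DegenerateAtBoundary α β T a b := ⟨hannn, haα, haβ, hbα, hbβ⟩
  intro x hx t ht
  exact le_antisymm
    (SolvesOn.le heq₁ heq₂ hab hfcont hw₁t hw₂t hw₁x hw₂x hw₁c hw₂c hinit₁ hinit₂ x hx t ht)
    (SolvesOn.le heq₂ heq₁ hab hfcont hw₂t hw₁t hw₂x hw₁x hw₂c hw₁c hinit₂ hinit₁ x hx t ht)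

/-- One-dimensional uniqueness for the degenerate parabolic equation
`wₜ = a w_{xx} + b w_x + f w + g` on `[α,β] × [0,T]` with `a ≥ 0`, `a = 0` at the two
boundary points, and `b ν ≤ 0` at each boundary point (i.e. `b β ≤ 0` and `b α ≥ 0`);
no boundary conditions are imposed. -/
theorem stmt5 (α β T : ℝ) (hαβ : α < β) (hT : 0 < T)
    (a b f g : ℝ → ℝ → ℝ)
    (hacont : ContinuousOn (fun p : ℝ × ℝ => a p.1 p.2) (Set.Icc α β ×ˢ Set.Icc 0 T))
    (hbcont : ContinuousOn (fun p : ℝ × ℝ => b p.1 p.2) (Set.Icc α β ×ˢ Set.Icc 0 T))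
    (hfcont : ContinuousOn (fun p : ℝ × ℝ => f p.1 p.2) (Set.Icc α β ×ˢ Set.Icc 0 T))
    (hgcont : ContinuousOn (fun p : ℝ × ℝ => g p.1 p.2) (Set.Icc α β ×ˢ Set.Icc 0 T))
    (hannn : ∀ x ∈ Set.Icc α β, ∀ t ∈ Set.Icc 0 T, 0 ≤ a x t)
    (haα : ∀ t ∈ Set.Icc 0 T, a α t = 0) (haβ : ∀ t ∈ Set.Icc 0 T, a β t = 0)
    (hbα : ∀ t ∈ Set.Icc 0 T, 0 ≤ b α t) (hbβ : ∀ t ∈ Set.Icc 0 T, b β t ≤ 0)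
    (w₁ w₂ : ℝ → ℝ → ℝ)
    (hw₁t : ∀ x, Differentiable ℝ (w₁ x)) (hw₂t : ∀ x, Differentiable ℝ (w₂ x))
    (hw₁x : ∀ t, ContDiff ℝ 2 fun x => w₁ x t) (hw₂x : ∀ t, ContDiff ℝ 2 fun x => w₂ x t)
    (hw₁c : Continuous fun p : ℝ × ℝ => w₁ p.1 p.2)
    (hw₂c : Continuous fun p : ℝ × ℝ => w₂ p.1 p.2)
    (heq₁ : ∀ x ∈ Set.Icc α β, ∀ t ∈ Set.Icc 0 T,
      deriv (w₁ x) t = a x t * deriv (deriv fun y => w₁ y t) x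
        + b x t * deriv (fun y => w₁ y t) x + f x t * w₁ x t + g x t)
    (heq₂ : ∀ x ∈ Set.Icc α β, ∀ t ∈ Set.Icc 0 T,
      deriv (w₂ x) t = a x t * deriv (deriv fun y => w₂ y t) x
        + b x t * deriv (fun y => w₂ y t) x + f x t * w₂ x t + g x t)
    (hinit₁ : ∀ x ∈ Set.Icc α β, w₁ x 0 = 0) (hinit₂ : ∀ x ∈ Set.Icc α β, w₂ x 0 = 0) :
    ∀ x ∈ Set.Icc α β, ∀ t ∈ Set.Icc 0 T, w₁ x t = w₂ x t :=
  stmt5_general α β T a b f g hfcont hannn haα haβ hbα hbβ w₁ w₂ hw₁t hw₂t hw₁x hw₂x hw₁c hw₂c heq₁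
    heq₂ hinit₁ hinit₂
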